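/- arXiv:1609.08302 — 2 statements merged into one kernel-verified Lean document; each statement's English description precedes it below -/
import Mathlib

section
/- Let a, b : ℕ≥1 → {0,1,2} differ first at index k. Then d(a,b) = 0 if and only if a_i = b_k for all i > k and b_i = a_k for all i > k (i.e., a and b are the two code representations of the same junction point of the Sierpinski gasket). -/
/-- coefficient α_i -/
noncomputable def alphaC (a b : ℕ → Fin 3) (k i : ℕ) : ℝ := if a i = b k then 0 else 1
/-- coefficient β_i -/
noncomputable def betaC (a b : ℕ → Fin 3) (k i : ℕ) : ℝ := if b i = a k then 0 else 1
/-- coefficient γ_i -/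
noncomputable def gammaC (a b : ℕ → Fin 3) (k i : ℕ) : ℝ :=
  if a i ≠ a k ∧ a i ≠ b k then 0 else 1
/-- coefficient δ_i -/
noncomputable def deltaC (a b : ℕ → Fin 3) (k i : ℕ) : ℝ :=
  if b i ≠ b k ∧ b i ≠ a k then 0 else 1

/-- first expression: ∑_{i=k+1}^∞ (α_i+β_i)/2^i -/
noncomputable def sgFirst (a b : ℕ → Fin 3) (k : ℕ) : ℝ :=
  ∑' n : ℕ, (alphaC a b k (k + 1 + n) + betaC a b k (k + 1 + n)) / 2 ^ (k + 1 + n)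
/-- second expression: 1/2^k + ∑_{i=k+1}^∞ (γ_i+δ_i)/2^i -/
noncomputable def sgSecond (a b : ℕ → Fin 3) (k : ℕ) : ℝ :=
  1 / 2 ^ k + ∑' n : ℕ, (gammaC a b k (k + 1 + n) + deltaC a b k (k + 1 + n)) / 2 ^ (k + 1 + n)
/-- the intrinsic code distance on the Sierpinski gasket -/
noncomputable def sgDist (a b : ℕ → Fin 3) (k : ℕ) : ℝ :=
  min (sgFirst a b k) (sgSecond a b k)

lemma first_term_nonneg (a b : ℕ → Fin 3) (k n : ℕ) :
    0 ≤ (alphaC a b k (k + 1 + n) + betaC a b k (k + 1 + n)) / 2 ^ (k + 1 + n) := by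
  have h1 : (0:ℝ) ≤ alphaC a b k (k + 1 + n) := by unfold alphaC; split <;> norm_num
  have h2 : (0:ℝ) ≤ betaC a b k (k + 1 + n) := by unfold betaC; split <;> norm_num
  positivity

lemma first_summable (a b : ℕ → Fin 3) (k : ℕ) :
    Summable (fun n : ℕ =>
      (alphaC a b k (k + 1 + n) + betaC a b k (k + 1 + n)) / 2 ^ (k + 1 + n)) := by
  refine Summable.of_nonneg_of_le (first_term_nonneg a b k) (fun n => ?_)
    (((summable_geometric_of_lt_one (by norm_num : (0:ℝ) ≤ 1/2) (by norm_num)).mul_left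
      (2 / 2 ^ (k + 1))))
  · 
    have h1 : alphaC a b k (k + 1 + n) ≤ 1 := by unfold alphaC; split <;> norm_num
    have h2 : betaC a b k (k + 1 + n) ≤ 1 := by unfold betaC; split <;> norm_num
    have key : ((2:ℝ) / 2 ^ (k + 1)) * (1 / 2) ^ n = 2 / 2 ^ (k + 1 + n) := by
      rw [pow_add, div_pow, one_pow]
      field_simp
      ring
    rw [key]
    gcongr
    linarith

lemma sgSecond_pos (a b : ℕ → Fin 3) (k : ℕ) : 0 < sgSecond a b k := by
  unfold sgSecond
  have h : 0 ≤ ∑' n : ℕ,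
      (gammaC a b k (k + 1 + n) + deltaC a b k (k + 1 + n)) / 2 ^ (k + 1 + n) := by
    apply tsum_nonneg
    intro n
    have h1 : (0:ℝ) ≤ gammaC a b k (k + 1 + n) := by unfold gammaC; split <;> norm_num
    have h2 : (0:ℝ) ≤ deltaC a b k (k + 1 + n) := by unfold deltaC; split <;> norm_num
    positivity
  have : (0:ℝ) < 1 / 2 ^ k := by positivity
  linarith

set_option maxHeartbeats 1000000 in
/-- d(a,b) = 0 iff a, b are the two representations of a junction point. -/
theorem stmt7 (a b : ℕ → Fin 3) (k : ℕ) (hk : 1 ≤ k) (hne : a k ≠ b k)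
    (hmin : ∀ s, 1 ≤ s → s < k → a s = b s) :
    sgDist a b k = 0 ↔ (∀ i, k < i → a i = b k) ∧ (∀ i, k < i → b i = a k) := by
  have hfz : sgFirst a b k = 0 ↔
      (∀ i, k < i → a i = b k) ∧ (∀ i, k < i → b i = a k) := by
    unfold sgFirst
    have hzero : (∑' n : ℕ,
        (alphaC a b k (k + 1 + n) + betaC a b k (k + 1 + n)) / 2 ^ (k + 1 + n)) = 0 ↔
        ∀ n : ℕ, (alphaC a b k (k + 1 + n) + betaC a b k (k + 1 + n)) / 2 ^ (k + 1 + n) = 0 := by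
      constructor
      · intro h n
        by_contra hc
        have hpos := lt_of_le_of_ne (first_term_nonneg a b k n) (Ne.symm hc)
        have := Summable.tsum_pos (first_summable a b k) (first_term_nonneg a b k) n hpos
        linarith
      · intro h
        exact (tsum_congr h).trans tsum_zero
    rw [hzero]
    have hterm : ∀ n : ℕ,
        ((alphaC a b k (k + 1 + n) + betaC a b k (k + 1 + n)) / 2 ^ (k + 1 + n) = 0) ↔
        (a (k + 1 + n) = b k ∧ b (k + 1 + n) = a k) := by
      intro n
      have hpos : (0:ℝ) < 2 ^ (k + 1 + n) := by positivity
      rw [div_eq_zero_iff]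
      unfold alphaC betaC
      constructor
      · rintro (h | h)
        · split_ifs at h with h1 h2 <;> first | exact ⟨h1, h2⟩ | norm_num at h
        · exact absurd h (ne_of_gt hpos)
      · rintro ⟨h1, h2⟩
        left
        simp [h1, h2]
    constructor
    · intro h
      constructor
      · intro i hi
        obtain ⟨n, rfl⟩ : ∃ n, i = k + 1 + n := ⟨i - (k + 1), by omega⟩
        exact ((hterm n).mp (h n)).1
      · intro i hi
        obtain ⟨n, rfl⟩ : ∃ n, i = k + 1 + n := ⟨i - (k + 1), by omega⟩
        exact ((hterm n).mp (h n)).2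
    · rintro ⟨h1, h2⟩ n
      exact (hterm n).mpr ⟨h1 _ (by omega), h2 _ (by omega)⟩
  unfold sgDist
  rw [← hfz]
  constructor
  · intro h
    rcases min_eq_iff.mp h with ⟨h', _⟩ | ⟨h', _⟩
    · exact h'
    · exact absurd h' (ne_of_gt (sgSecond_pos a b k))
  · intro h
    rw [h]
    exact min_eq_left (le_of_lt (sgSecond_pos a b k))
end

section
/- Let a_1, a_2 ∈ {0,1,2} with a_1 ≠ a_2, and let x : ℕ≥1 → {0,1,2} be a sequence with x_1 ≠ a_1 and x_1 ≠ a_2. Let p = (a_1, a_2, a_2, a_2, ...) and p' = (a_2, a_1, a_1, a_1, ...) be the two code representations of the junction point. Then d(x, p) = d(x, p'). -/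
lemma fin3_third : ∀ u v w z : Fin 3, u ≠ v → u ≠ w → v ≠ w →
    ((z ≠ u ∧ z ≠ v) ↔ z = w) := by decide

lemma key_shift (f : ℕ → ℝ) (hf : ∀ n, f n = 0 ∨ f n = 1) :
    ∑' n : ℕ, (f n + 1) / 2 ^ (1 + 1 + n) =
      1 / 2 ^ 1 + ∑' n : ℕ, f n / 2 ^ (1 + 1 + n) := by
  have hnn : ∀ n, (0:ℝ) ≤ f n := by
    intro n; rcases hf n with h | h <;> simp [h]
  have hle : ∀ n, f n ≤ 1 := by
    intro n; rcases hf n with h | h <;> simp [h]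
  have hgeo : ∀ n : ℕ, (1:ℝ) / 2 ^ (1 + 1 + n) ≤ (1/2) ^ n := by
    intro n
    rw [div_pow, one_pow]
    gcongr
    · norm_num
    · omega
  have hs : Summable (fun n : ℕ => f n / 2 ^ (1 + 1 + n)) := by
    apply Summable.of_nonneg_of_le
      (fun n => div_nonneg (hnn n) (by positivity))
      (fun n => le_trans ?_ (hgeo n)) summable_geometric_two
    gcongr
    exact hle n
  have hone : Summable (fun n : ℕ => (1:ℝ) / 2 ^ (1 + 1 + n)) := by
    apply Summable.of_nonneg_of_le (fun n => by positivity)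
      (fun n => hgeo n) summable_geometric_two
  have hsum1 : ∑' n : ℕ, (1:ℝ) / 2 ^ (1 + 1 + n) = 1 / 2 ^ 1 := by
    have : ∀ n : ℕ, (1:ℝ) / 2 ^ (1 + 1 + n) = (1/4) * (1/2)^n := by
      intro n
      rw [pow_add, one_div, mul_inv, div_pow]
      norm_num
    rw [tsum_congr this, tsum_mul_left, tsum_geometric_two]
    norm_num
  calc ∑' n : ℕ, (f n + 1) / 2 ^ (1 + 1 + n)
      = ∑' n : ℕ, (f n / 2 ^ (1 + 1 + n) + 1 / 2 ^ (1 + 1 + n)) := by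
        apply tsum_congr; intro n; rw [add_div]
    _ = ∑' n : ℕ, f n / 2 ^ (1 + 1 + n) + ∑' n : ℕ, (1:ℝ) / 2 ^ (1 + 1 + n) :=
        Summable.tsum_add hs hone
    _ = 1 / 2 ^ 1 + ∑' n : ℕ, f n / 2 ^ (1 + 1 + n) := by rw [hsum1, add_comm]

/-- The distance from x to a junction point does not depend on the chosen representation. -/
theorem stmt11 (a₁ a₂ : Fin 3) (h12 : a₁ ≠ a₂) (x : ℕ → Fin 3)
    (h1 : x 1 ≠ a₁) (h2 : x 1 ≠ a₂)
    (p p' : ℕ → Fin 3)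
    (hp : ∀ n, p n = if n = 1 then a₁ else a₂)
    (hp' : ∀ n, p' n = if n = 1 then a₂ else a₁) :
    sgDist x p 1 = sgDist x p' 1 := by
  have hp1 : p 1 = a₁ := by rw [hp]; simp
  have hp'1 : p' 1 = a₂ := by rw [hp']; simp
  have hpn : ∀ n : ℕ, p (1 + 1 + n) = a₂ := by intro n; rw [hp]; simp [Nat.add_assoc]; omega
  have hp'n : ∀ n : ℕ, p' (1 + 1 + n) = a₁ := by intro n; rw [hp']; simp [Nat.add_assoc]; omega
  set F : ℕ → ℝ := fun n => if x (1 + 1 + n) = a₁ then 0 else 1 with hF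
  set G : ℕ → ℝ := fun n => if x (1 + 1 + n) = a₂ then 0 else 1 with hG
  have hFtf : ∀ n, F n = 0 ∨ F n = 1 := by
    intro n; by_cases h : x (1 + 1 + n) = a₁ <;> simp [hF, h]
  have hGtf : ∀ n, G n = 0 ∨ G n = 1 := by
    intro n; by_cases h : x (1 + 1 + n) = a₂ <;> simp [hG, h]
  have e1 : sgFirst x p 1 = ∑' n : ℕ, (F n + 1) / 2 ^ (1 + 1 + n) := by
    unfold sgFirst
    apply tsum_congr; intro n
    congr 1
    rw [alphaC, betaC, hp1, hpn]
    have hb : (if a₂ = x 1 then (0:ℝ) else 1) = 1 := if_neg (fun h => h2 h.symm)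
    rw [hb, hF]
  have e2 : sgFirst x p' 1 = ∑' n : ℕ, (G n + 1) / 2 ^ (1 + 1 + n) := by
    unfold sgFirst
    apply tsum_congr; intro n
    congr 1
    rw [alphaC, betaC, hp'1, hp'n]
    have hb : (if a₁ = x 1 then (0:ℝ) else 1) = 1 := if_neg (fun h => h1 h.symm)
    rw [hb, hG]
  have e3 : sgSecond x p 1 = 1 / 2 ^ 1 + ∑' n : ℕ, G n / 2 ^ (1 + 1 + n) := by
    unfold sgSecond
    congr 1
    apply tsum_congr; intro n
    congr 1
    rw [gammaC, deltaC, hp1, hpn]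
    have hd : (if a₂ ≠ a₁ ∧ a₂ ≠ x 1 then (0:ℝ) else 1) = 0 :=
      if_pos ⟨h12.symm, fun h => h2 h.symm⟩
    rw [hd]
    have hiff := fin3_third (x 1) a₁ a₂ (x (1 + 1 + n)) h1 h2 h12
    by_cases h : x (1 + 1 + n) = a₂
    · rw [if_pos (hiff.mpr h), hG]; simp [h]
    · rw [if_neg (fun hc => h (hiff.mp hc)), hG]; simp [h]
  have e4 : sgSecond x p' 1 = 1 / 2 ^ 1 + ∑' n : ℕ, F n / 2 ^ (1 + 1 + n) := by
    unfold sgSecond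
    congr 1
    apply tsum_congr; intro n
    congr 1
    rw [gammaC, deltaC, hp'1, hp'n]
    have hd : (if a₁ ≠ a₂ ∧ a₁ ≠ x 1 then (0:ℝ) else 1) = 0 :=
      if_pos ⟨h12, fun h => h1 h.symm⟩
    rw [hd]
    have hiff := fin3_third (x 1) a₂ a₁ (x (1 + 1 + n)) h2 h1 h12.symm
    by_cases h : x (1 + 1 + n) = a₁
    · rw [if_pos (hiff.mpr h), hF]; simp [h]
    · rw [if_neg (fun hc => h (hiff.mp hc)), hF]; simp [h]
  unfold sgDist
  rw [e1, e2, e3, e4, key_shift F hFtf, key_shift G hGtf, min_comm]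
end
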